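/- Let α be a simple cycle without exits in an ultragraph G, let {R_e, D_A, f_e} be a G-branching system on (X, μ) with induced representation π on L²(X, μ), and suppose E ⊆ D_{s(α₁)} is measurable with μ(E) ≠ 0 and f_{nα}(E) ∩ E = ∅ μ-a.e. for all n in finite sets ℱ, ℱ' ⊆ ℕ. Then for all complex scalars z, z_n (n ∈ ℱ), z_m' (m ∈ ℱ'), one has |z| ≤ ‖ z·π(p_{s(α₁)}) + Σ_{n∈ℱ} z_n·π(s_{nα}) + Σ_{m∈ℱ'} z_m'·π(s_{mα})* ‖, where the norm is the operator norm on L²(X, μ). -/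

import Mathlib

open MeasureTheory Filter Set
open scoped ENNReal

universe u v w

structure Ultragraph (V : Type u) (E : Type v) where
  s : E → V
  r : E → Set V
  r_nonempty : ∀ e, (r e).Nonempty

namespace Ultragraph

variable {V : Type u} {E : Type v}

/-- The lattice `𝒢⁰` of Tomforde (with `∅` included, so that `p_∅ = 0` makes sense). -/
inductive InG0 (G : Ultragraph V E) : Set V → Prop
  | empty : InG0 G ∅
  | singleton (v : V) : InG0 G {v}
  | range (e : E) : InG0 G (G.r e)
  | union {A B : Set V} : InG0 G A → InG0 G B → InG0 G (A ∪ B)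
  | inter {A B : Set V} : InG0 G A → InG0 G B → InG0 G (A ∩ B)

/-- A `G`-branching system on a measure space `(X, μ)`. -/
structure BranchingSystem (G : Ultragraph V E) (X : Type w) [MeasurableSpace X]
    (μ : Measure X) where
  R : E → Set X
  D : Set V → Set X
  f : E → X → X
  finv : E → X → X
  measurableSet_R : ∀ e, MeasurableSet (R e)
  measurableSet_D : ∀ A, G.InG0 A → MeasurableSet (D A)
  ae_disjoint : ∀ e e', e ≠ e' → μ (R e ∩ R e') = 0
  D_empty : D ∅ = ∅
  D_inter : ∀ A B, G.InG0 A → G.InG0 B → (D A ∩ D B : Set X) =ᵐ[μ] (D (A ∩ B) : Set X)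
  D_union : ∀ A B, G.InG0 A → G.InG0 B → (D A ∪ D B : Set X) =ᵐ[μ] (D (A ∪ B) : Set X)
  R_subset_D : ∀ e, μ (R e \ D {G.s e}) = 0
  D_eq_iUnion : ∀ v, {e | G.s e = v}.Finite → {e | G.s e = v}.Nonempty →
    (D {v} : Set X) =ᵐ[μ] (⋃ e ∈ {e | G.s e = v}, R e : Set X)
  measurable_f : ∀ e, Measurable (f e)
  measurable_finv : ∀ e, Measurable (finv e)
  mapsTo_f : ∀ e, Set.MapsTo (f e) (D (G.r e)) (R e)
  mapsTo_finv : ∀ e, Set.MapsTo (finv e) (R e) (D (G.r e))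
  f_finv : ∀ e, ∀ᵐ x ∂(μ.restrict (R e)), f e (finv e x) = x
  finv_f : ∀ e, ∀ᵐ x ∂(μ.restrict (D (G.r e))), finv e (f e x) = x
  pushforward_f_ac : ∀ e, (μ.restrict (R e)).map (finv e) ≪ μ.restrict (D (G.r e))
  pushforward_finv_ac : ∀ e, (μ.restrict (D (G.r e))).map (f e) ≪ μ.restrict (R e)

variable {G : Ultragraph V E} {X : Type w} [MeasurableSpace X] {μ : Measure X}

/-- `Φ_{f_e} = d(μ ∘ f_e)/dμ` (where `μ ∘ f_e` is the pushforward of `μ|_{R_e}` by `f_e⁻¹`). -/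
noncomputable def BranchingSystem.PhiF (B : BranchingSystem G X μ) (e : E) : X → ℝ≥0∞ :=
  ((μ.restrict (B.R e)).map (B.finv e)).rnDeriv μ

/-- `Φ_{f_e⁻¹} = d(μ ∘ f_e⁻¹)/dμ`. -/
noncomputable def BranchingSystem.PhiFinv (B : BranchingSystem G X μ) (e : E) : X → ℝ≥0∞ :=
  ((μ.restrict (B.D (G.r e))).map (B.f e)).rnDeriv μ

/-- `S_e φ = Φ_{f_e⁻¹}^{1/2} ⬝ (φ ∘ f_e⁻¹)`, extended by zero off `R_e`. -/
noncomputable def BranchingSystem.SFun (B : BranchingSystem G X μ) (e : E) (φ : X → ℂ) :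
    X → ℂ :=
  (B.R e).indicator fun x => (Real.sqrt ((B.PhiFinv e x).toReal) : ℂ) * φ (B.finv e x)

/-- `S_e^* φ = Φ_{f_e}^{1/2} ⬝ (φ ∘ f_e)`, extended by zero off `D_{r(e)}`. -/
noncomputable def BranchingSystem.SStarFun (B : BranchingSystem G X μ) (e : E) (φ : X → ℂ) :
    X → ℂ :=
  (B.D (G.r e)).indicator fun x => (Real.sqrt ((B.PhiF e x).toReal) : ℂ) * φ (B.f e x)

/-- `f_α = f_{α₁} ∘ ⋯ ∘ f_{αₙ}` for a path `α`. -/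
def BranchingSystem.fPath (B : BranchingSystem G X μ) :
    ∀ k : ℕ, (Fin (k + 1) → E) → X → X
  | 0, α => B.f (α 0)
  | k + 1, α => B.f (α 0) ∘ BranchingSystem.fPath B k fun i => α i.succ

/-- A Cuntz–Krieger `G`-family in a star ring. -/
structure CKFamily (G : Ultragraph V E) (A : Type w) [NonUnitalRing A] [StarRing A] where
  P : Set V → A
  S : E → A
  P_empty : P ∅ = 0
  P_star : ∀ B, G.InG0 B → star (P B) = P B
  P_mul : ∀ B C, G.InG0 B → G.InG0 C → P B * P C = P (B ∩ C)
  P_union : ∀ B C, G.InG0 B → G.InG0 C → P (B ∪ C) = P B + P C - P (B ∩ C)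
  S_orth : ∀ e e', e ≠ e' → star (S e) * S e' = 0
  S_star_mul : ∀ e, star (S e) * S e = P (G.r e)
  S_le : ∀ e, P {G.s e} * (S e * star (S e)) = S e * star (S e)
  CK : ∀ v, (h : {e | G.s e = v}.Finite) → {e | G.s e = v}.Nonempty →
    P {v} = ∑ e ∈ h.toFinset, S e * star (S e)

/-- `s_α = s_{α₁} ⋯ s_{αₙ}` for a path `α`. -/
def CKFamily.sPath {A : Type w} [NonUnitalRing A] [StarRing A] (F : CKFamily G A) :
    ∀ k : ℕ, (Fin (k + 1) → E) → A
  | 0, α => F.S (α 0)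
  | k + 1, α => F.S (α 0) * CKFamily.sPath F k fun i => α i.succ

def IsPath (G : Ultragraph V E) {k : ℕ} (α : Fin (k + 1) → E) : Prop :=
  ∀ i : Fin k, G.s (α i.succ) ∈ G.r (α i.castSucc)

def IsCycle (G : Ultragraph V E) {k : ℕ} (α : Fin (k + 1) → E) : Prop :=
  IsPath G α ∧ G.s (α 0) ∈ G.r (α (Fin.last k))

/-- A simple cycle without exits: a cycle with pairwise distinct edges such that each
`r(αᵢ)` is a singleton and `s⁻¹(s(αᵢ)) = {αᵢ}`. -/
def IsSimpleCycleNoExits (G : Ultragraph V E) {k : ℕ} (α : Fin (k + 1) → E) : Prop :=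
  IsCycle G α ∧ Function.Injective α ∧
    ∀ i, (∃ w, G.r (α i) = {w}) ∧ ∀ e, G.s e = G.s (α i) → e = α i

def HasExit (G : Ultragraph V E) {k : ℕ} (α : Fin (k + 1) → E) : Prop :=
  (∃ i : Fin k, {e | G.s e ∈ G.r (α i.castSucc)} ≠ {α i.succ}) ∨
  {e | G.s e ∈ G.r (α (Fin.last k))} ≠ {α 0} ∨
  ∃ i, ∃ v ∈ G.r (α i), ∀ e, G.s e ≠ v

def ConditionL (G : Ultragraph V E) : Prop :=
  ∀ (k : ℕ) (α : Fin (k + 1) → E), IsCycle G α → HasExit G α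

def Hereditary (G : Ultragraph V E) (H : Set (Set V)) : Prop :=
  (∀ A ∈ H, G.InG0 A) ∧ (∀ A ∈ H, ∀ B ∈ H, A ∪ B ∈ H) ∧
  (∀ A ∈ H, ∀ B, G.InG0 B → B ⊆ A → B ∈ H) ∧
  ∀ e, {G.s e} ∈ H → G.r e ∈ H

def Saturated (G : Ultragraph V E) (T : Set (Set V)) : Prop :=
  ∀ v, {e | G.s e = v}.Finite → {e | G.s e = v}.Nonempty →
    (∀ e, G.s e = v → G.r e ∈ T) → {v} ∈ T

end Ultragraph

/-- A closed two-sided (complex) ideal, as a subset. -/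
def IsClosedTwoSidedIdealIn (A : Type w) [NonUnitalNormedRing A] [Module ℂ A]
    (J : Set A) : Prop :=
  IsClosed J ∧ (0 : A) ∈ J ∧ (∀ x ∈ J, ∀ y ∈ J, x + y ∈ J) ∧
    (∀ (c : ℂ), ∀ x ∈ J, c • x ∈ J) ∧ ∀ x ∈ J, ∀ a, a * x ∈ J ∧ x * a ∈ J

/-- The smallest closed two-sided ideal containing `s`. -/
def idealGeneratedBy {A : Type w} [NonUnitalNormedRing A] [Module ℂ A] (s : Set A) : Set A :=
  ⋂₀ {J | IsClosedTwoSidedIdealIn A J ∧ s ⊆ J}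

namespace Ultragraph

/-- A model of the ultragraph C*-algebra `C*(G)`: a C*-algebra generated by a universal
Cuntz–Krieger `G`-family, together with its gauge action. -/
structure UltragraphCStarAlgebra (G : Ultragraph V E) (A : Type w)
    [NonUnitalNormedRing A] [StarRing A] [CStarRing A] [NormedSpace ℂ A]
    [IsScalarTower ℂ A A] [SMulCommClass ℂ A A] [StarModule ℂ A] [CompleteSpace A] where
  fam : CKFamily G A
  P_ne_zero : ∀ B, G.InG0 B → B.Nonempty → fam.P B ≠ 0
  generates : ∀ C : Set A, IsClosed C →
    (∀ x ∈ C, ∀ y ∈ C, x + y ∈ C) → (∀ x ∈ C, ∀ y ∈ C, x * y ∈ C) →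
    (∀ (c : ℂ), ∀ x ∈ C, c • x ∈ C) → (∀ x ∈ C, star x ∈ C) →
    (∀ B, G.InG0 B → fam.P B ∈ C) → (∀ e, fam.S e ∈ C) → ∀ x, x ∈ C
  gauge : ∀ z : ℂ, ‖z‖ = 1 → A ≃⋆ₐ[ℂ] A
  gauge_P : ∀ z hz B, G.InG0 B → gauge z hz (fam.P B) = fam.P B
  gauge_S : ∀ z hz e, gauge z hz (fam.S e) = z • fam.S e
  universal : ∀ (B : Type w) [NonUnitalNormedRing B] [StarRing B] [CStarRing B]
    [NormedSpace ℂ B] [IsScalarTower ℂ B B] [SMulCommClass ℂ B B] [StarModule ℂ B]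
    [CompleteSpace B], ∀ F : CKFamily G B,
    ∃ φ : A →⋆ₙₐ[ℂ] B, Continuous φ ∧
      (∀ C, G.InG0 C → φ (fam.P C) = F.P C) ∧ ∀ e, φ (fam.S e) = F.S e

end Ultragraph

/-!
Take a unit vector `φ ∈ L²(μ)` vanishing off `E`. Each `π(s_e)` carries functions supported in
`F` to functions supported in `f_e(F)`, so `π(s_{nα})φ` is supported in `f_α^n(E)`, which meets
`E` in a null set. Hence `φ ⊥ π(s_{nα})φ` and, taking adjoints, `φ ⊥ π(s_{mα})^*φ`, while
`π(p_{s(α₁)})φ = φ` because `E ⊆ D_{s(α₁)}`. So `z = ⟪φ, Tφ⟫` for the operator `T` on the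
right, and `|z| ≤ ‖T‖`.
-/

namespace MeasureTheory

variable {α : Type*} [MeasurableSpace α] {μ : Measure α}

theorem L2.inner_eq_zero_of_ae_eq_zero_or {𝕜 F : Type*} [RCLike 𝕜] [NormedAddCommGroup F]
    [InnerProductSpace 𝕜 F] {f g : Lp F 2 μ} (h : ∀ᵐ x ∂μ, f x = 0 ∨ g x = 0) :
    inner 𝕜 f g = 0 := by
  rw [L2.inner_def]
  refine integral_eq_zero_of_ae (h.mono fun x hx => ?_)
  rcases hx with hx | hx <;> simp [hx]

theorem Lp.exists_norm_eq_one_ae_eq_zero_of_notMem {𝕜 : Type*} [RCLike 𝕜] {p : ℝ≥0∞}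
    [Fact (1 ≤ p)] [SigmaFinite μ] {s : Set α} (hs : MeasurableSet s) (hμs : μ s ≠ 0) :
    ∃ f : Lp 𝕜 p μ, ‖f‖ = 1 ∧ ∀ᵐ x ∂μ, x ∉ s → f x = 0 := by
  obtain ⟨t, ht, hts, htpos, httop⟩ :=
    Measure.exists_subset_measure_lt_top hs (pos_iff_ne_zero.2 hμs)
  set g : Lp 𝕜 p μ := indicatorConstLp p ht httop.ne 1
  have hg : g ≠ 0 := by
    have hp : p ≠ 0 := (zero_lt_one.trans_le Fact.out).ne'
    rw [← norm_pos_iff, norm_indicatorConstLp' hp htpos.ne', norm_one, one_mul]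
    exact Real.rpow_pos_of_pos (ENNReal.toReal_pos htpos.ne' httop.ne) _
  refine ⟨(‖g‖⁻¹ : 𝕜) • g, norm_smul_inv_norm hg, ?_⟩
  filter_upwards [Lp.coeFn_smul (‖g‖⁻¹ : 𝕜) g,
    indicatorConstLp_coeFn_notMem (p := p) (hs := ht) (hμs := httop.ne) (c := (1 : 𝕜))]
    with x hx hgx hxs
  rw [hx, Pi.smul_apply, hgx fun hxt => hxs (hts hxt), smul_zero]

/-- Quantifying over arbitrary, possibly non-measurable, sets `s` is what makes this notion
compose along `g ∘ g'` without any nonsingularity assumption on `g`. -/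
def Lp.TransportsSupport {F : Type*} [NormedAddCommGroup F] {p : ℝ≥0∞}
    (L : Lp F p μ → Lp F p μ) (g : α → α) : Prop :=
  ∀ (s : Set α) (f : Lp F p μ), (∀ᵐ x ∂μ, x ∉ s → f x = 0) → ∀ᵐ x ∂μ, x ∉ g '' s → L f x = 0

namespace Lp.TransportsSupport

variable {F : Type*} [NormedAddCommGroup F] {p : ℝ≥0∞} {L L' : Lp F p μ → Lp F p μ}
  {g g' : α → α}

theorem comp (h : TransportsSupport L g) (h' : TransportsSupport L' g') :
    TransportsSupport (L ∘ L') (g ∘ g') := by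
  intro s f hf
  rw [image_comp]
  exact h _ _ (h' s f hf)

theorem iterate (h : TransportsSupport L g) (n : ℕ) : TransportsSupport L^[n] g^[n] := by
  induction n with
  | zero => intro s f hf; simpa using hf
  | succ n ih => rw [Function.iterate_succ', Function.iterate_succ']; exact h.comp ih

theorem inner_apply_self_eq_zero {𝕜 : Type*} [RCLike 𝕜] [InnerProductSpace 𝕜 F]
    {L : Lp F 2 μ → Lp F 2 μ} (hL : TransportsSupport L g) {s : Set α} {f : Lp F 2 μ}
    (hf : ∀ᵐ x ∂μ, x ∉ s → f x = 0) (hs : μ (g '' s ∩ s) = 0) :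
    inner 𝕜 f (L f) = 0 := by
  refine L2.inner_eq_zero_of_ae_eq_zero_or ?_
  filter_upwards [hf, hL s f hf, measure_eq_zero_iff_ae_notMem.1 hs] with x hfx hLx hx
  by_cases hxs : x ∈ s
  · exact .inr (hLx fun hxg => hx ⟨hxg, hxs⟩)
  · exact .inl (hfx hxs)

end Lp.TransportsSupport

end MeasureTheory

namespace Ultragraph.BranchingSystem

variable {V E X : Type*} {G : Ultragraph V E} [MeasurableSpace X] {μ : Measure X}
  (B : BranchingSystem G X μ)

theorem ae_finv_of_ae {e : E} {p : X → Prop} (h : ∀ᵐ y ∂μ, p y) :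
    ∀ᵐ x ∂μ, x ∈ B.R e → p (B.finv e x) := by
  have h' : ∀ᵐ y ∂(μ.restrict (B.R e)).map (B.finv e), p y :=
    (B.pushforward_f_ac e).ae_le (ae_restrict_of_ae h)
  exact (ae_restrict_iff' (B.measurableSet_R e)).1
    (ae_of_ae_map (B.measurable_finv e).aemeasurable h')

theorem transportsSupport_of_ae_eq_sFun {p : ℝ≥0∞} {e : E} {L : Lp ℂ p μ → Lp ℂ p μ}
    (hL : ∀ φ, ⇑(L φ) =ᵐ[μ] B.SFun e ⇑φ) : Lp.TransportsSupport L (B.f e) := by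
  intro s φ hφ
  filter_upwards [hL φ, B.ae_finv_of_ae hφ,
    (ae_restrict_iff' (B.measurableSet_R e)).1 (B.f_finv e)] with x hLx hφx hfx hxs
  rw [hLx, SFun]
  by_cases hx : x ∈ B.R e
  · rw [indicator_of_mem hx, hφx hx fun hmem => hxs ⟨_, hmem, hfx hx⟩, mul_zero]
  · exact indicator_of_notMem hx _

theorem transportsSupport_sPath {p : ℝ≥0∞} [Fact (1 ≤ p)] {A Fπ : Type*} [NonUnitalRing A]
    [StarRing A] (F : CKFamily G A) [FunLike Fπ A (Lp ℂ p μ →L[ℂ] Lp ℂ p μ)]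
    [MulHomClass Fπ A (Lp ℂ p μ →L[ℂ] Lp ℂ p μ)] (π : Fπ)
    (hπS : ∀ e, ∀ φ : Lp ℂ p μ, ⇑(π (F.S e) φ) =ᵐ[μ] B.SFun e ⇑φ) :
    ∀ (k : ℕ) (α : Fin (k + 1) → E), Lp.TransportsSupport (π (F.sPath k α)) (B.fPath k α)
  | 0, α => B.transportsSupport_of_ae_eq_sFun (hπS (α 0))
  | k + 1, α => by
    rw [CKFamily.sPath, map_mul, FunLike.coe_mul_eq_comp, fPath]
    exact (B.transportsSupport_of_ae_eq_sFun (hπS _)).comp (transportsSupport_sPath F π hπS k _)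

end Ultragraph.BranchingSystem

namespace Ultragraph

theorem norm_estimate_of_moving_set_general
    {V E : Type*} {G : Ultragraph V E}
    {X : Type*} [MeasurableSpace X] {μ : Measure X} [SigmaFinite μ]
    (BS : BranchingSystem G X μ)
    {A : Type*} [NonUnitalNormedRing A] [StarRing A] [CStarRing A] [NormedSpace ℂ A]
    [IsScalarTower ℂ A A] [SMulCommClass ℂ A A] [StarModule ℂ A] [CompleteSpace A]
    (UA : UltragraphCStarAlgebra G A)
    (π : A →⋆ₙₐ[ℂ] (Lp ℂ 2 μ →L[ℂ] Lp ℂ 2 μ))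
    (hπP : ∀ B, G.InG0 B → ∀ φ : Lp ℂ 2 μ,
      ⇑(π (UA.fam.P B) φ) =ᵐ[μ] (BS.D B).indicator ⇑φ)
    (hπS : ∀ e, ∀ φ : Lp ℂ 2 μ, ⇑(π (UA.fam.S e) φ) =ᵐ[μ] BS.SFun e ⇑φ)
    (k : ℕ) (α : Fin (k + 1) → E)
    (Eset : Set X) (hEmeas : MeasurableSet Eset) (hEsub : Eset ⊆ BS.D {G.s (α 0)})
    (hEpos : μ Eset ≠ 0)
    (𝓕 𝓕' : Finset ℕ)
    (hdisj : ∀ n ∈ 𝓕 ∪ 𝓕', μ ((BS.fPath k α)^[n] '' Eset ∩ Eset) = 0)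
    (z : ℂ) (zn zm : ℕ → ℂ) :
    ‖z‖ ≤ ‖z • π (UA.fam.P {G.s (α 0)}) +
        ∑ n ∈ 𝓕, zn n • (π (UA.fam.sPath k α)) ^ n +
        ∑ m ∈ 𝓕', zm m • (star (π (UA.fam.sPath k α))) ^ m‖ := by
  obtain ⟨φ, hφ, hφE⟩ :=
    Lp.exists_norm_eq_one_ae_eq_zero_of_notMem (𝕜 := ℂ) (p := 2) hEmeas hEpos
  set S := π (UA.fam.sPath k α)
  set T := z • π (UA.fam.P {G.s (α 0)}) + ∑ n ∈ 𝓕, zn n • S ^ n + ∑ m ∈ 𝓕', zm m • star S ^ m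
  have hP : π (UA.fam.P {G.s (α 0)}) φ = φ := by
    refine Lp.ext <| (hπP _ (.singleton _) φ).trans ?_
    filter_upwards [hφE] with x hx
    exact indicator_apply_eq_self.2 fun hxD => hx fun hxE => hxD (hEsub hxE)
  have hS : ∀ n ∈ 𝓕 ∪ 𝓕', inner ℂ φ ((S ^ n) φ) = 0 := fun n hn => by
    rw [FunLike.coe_pow_eq_iterate]
    exact ((BS.transportsSupport_sPath UA.fam π hπS k α).iterate n).inner_apply_self_eq_zero
      hφE (hdisj n hn)
  have hS' : ∀ m ∈ 𝓕', inner ℂ φ ((star S ^ m) φ) = 0 := fun m hm => by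
    rw [← star_pow, ContinuousLinearMap.star_eq_adjoint,
      ContinuousLinearMap.adjoint_inner_right, inner_eq_zero_symm]
    exact hS m (Finset.mem_union_right _ hm)
  have hT : inner ℂ φ (T φ) = z := by
    simp only [T, add_apply, smul_apply, sum_apply, inner_add_right, inner_sum,
      inner_smul_right, hP, inner_self_eq_norm_sq_to_K, hφ]
    rw [Finset.sum_eq_zero fun n hn => by rw [hS n (Finset.mem_union_left _ hn), mul_zero],
      Finset.sum_eq_zero fun m hm => by rw [hS' m hm, mul_zero]]
    simp
  calc ‖z‖ = ‖inner ℂ φ (T φ)‖ := by rw [hT]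
    _ ≤ ‖φ‖ * (‖T‖ * ‖φ‖) := (norm_inner_le_norm _ _).trans (by gcongr; exact T.le_opNorm φ)
    _ = ‖T‖ := by rw [hφ, one_mul, mul_one]

/-- The key norm estimate: restricting to a set `E` moved off itself by the iterates of
`f_α` shows `|z| ≤ ‖z·π(p_{s(α₁)}) + Σ zₙ·π(s_{nα}) + Σ zₘ'·π(s_{mα})*‖`. -/
theorem norm_estimate_of_moving_set
    {V E : Type*} {G : Ultragraph V E}
    {X : Type*} [MeasurableSpace X] {μ : Measure X} [SigmaFinite μ]
    (BS : BranchingSystem G X μ)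
    {A : Type*} [NonUnitalNormedRing A] [StarRing A] [CStarRing A] [NormedSpace ℂ A]
    [IsScalarTower ℂ A A] [SMulCommClass ℂ A A] [StarModule ℂ A] [CompleteSpace A]
    (UA : UltragraphCStarAlgebra G A)
    (π : A →⋆ₙₐ[ℂ] (Lp ℂ 2 μ →L[ℂ] Lp ℂ 2 μ))
    (hπP : ∀ B, G.InG0 B → ∀ φ : Lp ℂ 2 μ,
      ⇑(π (UA.fam.P B) φ) =ᵐ[μ] (BS.D B).indicator ⇑φ)
    (hπS : ∀ e, ∀ φ : Lp ℂ 2 μ, ⇑(π (UA.fam.S e) φ) =ᵐ[μ] BS.SFun e ⇑φ)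
    (k : ℕ) (α : Fin (k + 1) → E) (hα : IsSimpleCycleNoExits G α)
    (Eset : Set X) (hEmeas : MeasurableSet Eset) (hEsub : Eset ⊆ BS.D {G.s (α 0)})
    (hEpos : μ Eset ≠ 0)
    (𝓕 𝓕' : Finset ℕ) (hpos : ∀ n ∈ 𝓕 ∪ 𝓕', 0 < n)
    (hdisj : ∀ n ∈ 𝓕 ∪ 𝓕', μ ((BS.fPath k α)^[n] '' Eset ∩ Eset) = 0)
    (z : ℂ) (zn zm : ℕ → ℂ) :
    ‖z‖ ≤ ‖z • π (UA.fam.P {G.s (α 0)}) +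
        ∑ n ∈ 𝓕, zn n • (π (UA.fam.sPath k α)) ^ n +
        ∑ m ∈ 𝓕', zm m • (star (π (UA.fam.sPath k α))) ^ m‖ :=
  norm_estimate_of_moving_set_general BS UA π hπP hπS k α Eset hEmeas hEsub hEpos 𝓕 𝓕' hdisj z zn zm

end Ultragraph
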